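/- arXiv:2001.11422 — 2 statements merged into one kernel-verified Lean document; each statement's English description precedes it below -/
import Mathlib

section
/- In the fixed-price location game where consumers are uniformly distributed on [−κ, κ] (κ > 0), with maximal travel distance δ > 0, an equilibrium where the firms are at distance at least 2δ exists if and only if 2δ ≤ κ; in that case, up to permutation of players, the set of equilibria with x₂ − x₁ ≥ 2δ is exactly {(x₁,x₂) : −κ + δ ≤ x₁, x₁ + 2δ ≤ x₂ ≤ κ − δ}. -/
open MeasureTheory Set

/-- Market share of a firm located at `own` when the other firm is at `opp`:
consumers buy from the nearest firm within distance `δ` (ties split equally;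
for `own ≠ opp` the tie set has measure zero). -/
noncomputable def payoff (f : ℝ → ℝ) (δ own opp : ℝ) : ℝ :=
  if own = opp then (∫ t in {t : ℝ | |t - own| ≤ δ}, f t) / 2
  else ∫ t in {t : ℝ | |t - own| ≤ δ ∧ |t - own| ≤ |t - opp|}, f t

/-- Pure-strategy Nash equilibrium of the fixed-price location game. -/
def IsEquilibrium (f : ℝ → ℝ) (δ x₁ x₂ : ℝ) : Prop :=
  (∀ y : ℝ, payoff f δ y x₂ ≤ payoff f δ x₁ x₂) ∧
  (∀ y : ℝ, payoff f δ y x₁ ≤ payoff f δ x₂ x₁)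

lemma mid_lt {a b t : ℝ} (h : a < b) : |t - a| ≤ |t - b| ↔ t ≤ (a + b) / 2 := by
  constructor <;> intro H <;>
    rcases abs_cases (t - a) with ⟨h1, h1'⟩ | ⟨h1, h1'⟩ <;>
    rcases abs_cases (t - b) with ⟨h2, h2'⟩ | ⟨h2, h2'⟩ <;> linarith

lemma mid_gt {a b t : ℝ} (h : b < a) : |t - a| ≤ |t - b| ↔ (a + b) / 2 ≤ t := by
  constructor <;> intro H <;>
    rcases abs_cases (t - a) with ⟨h1, h1'⟩ | ⟨h1, h1'⟩ <;>
    rcases abs_cases (t - b) with ⟨h2, h2'⟩ | ⟨h2, h2'⟩ <;> linarith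

lemma set_self (own δ : ℝ) : {t : ℝ | |t - own| ≤ δ} = Icc (own - δ) (own + δ) := by
  ext t
  simp only [mem_setOf_eq, abs_le, mem_Icc]
  constructor <;> rintro ⟨h1, h2⟩ <;> constructor <;> linarith

lemma set_lt {own opp : ℝ} (δ : ℝ) (h : own < opp) :
    {t : ℝ | |t - own| ≤ δ ∧ |t - own| ≤ |t - opp|}
      = Icc (own - δ) (min (own + δ) ((own + opp) / 2)) := by
  ext t
  simp only [mem_setOf_eq, mem_Icc, abs_le, mid_lt h, le_min_iff]
  constructor
  · rintro ⟨⟨h1, h2⟩, h3⟩; exact ⟨by linarith, by linarith, h3⟩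
  · rintro ⟨h1, h2, h3⟩; exact ⟨⟨by linarith, by linarith⟩, h3⟩

lemma set_gt {own opp : ℝ} (δ : ℝ) (h : opp < own) :
    {t : ℝ | |t - own| ≤ δ ∧ |t - own| ≤ |t - opp|}
      = Icc (max (own - δ) ((own + opp) / 2)) (own + δ) := by
  ext t
  simp only [mem_setOf_eq, mem_Icc, abs_le, mid_gt h, max_le_iff]
  constructor
  · rintro ⟨⟨h1, h2⟩, h3⟩; exact ⟨⟨by linarith, h3⟩, by linarith⟩
  · rintro ⟨⟨h1, h3⟩, h2⟩; exact ⟨⟨by linarith, by linarith⟩, h3⟩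

lemma integral_box {κ : ℝ} {f : ℝ → ℝ}
    (hf : ∀ t, f t = if t ∈ Icc (-κ) κ then 1 / (2 * κ) else 0) (a b : ℝ) :
    ∫ t in Icc a b, f t = max (min b κ - max a (-κ)) 0 / (2 * κ) := by
  have hfi : f = (Icc (-κ) κ).indicator (fun _ => 1 / (2 * κ)) := by
    funext t; rw [hf t]; by_cases h : t ∈ Icc (-κ) κ <;> simp [h]
  rw [hfi, setIntegral_indicator measurableSet_Icc, setIntegral_const, Icc_inter_Icc,
    Real.volume_real_Icc, smul_eq_mul, mul_one_div]

lemma payoff_lt {κ δ : ℝ} {f : ℝ → ℝ}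
    (hf : ∀ t, f t = if t ∈ Icc (-κ) κ then 1 / (2 * κ) else 0)
    {own opp : ℝ} (h : own < opp) :
    payoff f δ own opp =
      max (min (min (own + δ) ((own + opp) / 2)) κ - max (own - δ) (-κ)) 0 / (2 * κ) := by
  rw [payoff, if_neg h.ne, set_lt δ h, integral_box hf]

lemma payoff_gt {κ δ : ℝ} {f : ℝ → ℝ}
    (hf : ∀ t, f t = if t ∈ Icc (-κ) κ then 1 / (2 * κ) else 0)
    {own opp : ℝ} (h : opp < own) :
    payoff f δ own opp =
      max (min (own + δ) κ - max (max (own - δ) ((own + opp) / 2)) (-κ)) 0 / (2 * κ) := by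
  rw [payoff, if_neg h.ne', set_gt δ h, integral_box hf]

lemma payoff_self {κ δ : ℝ} {f : ℝ → ℝ}
    (hf : ∀ t, f t = if t ∈ Icc (-κ) κ then 1 / (2 * κ) else 0) (own : ℝ) :
    payoff f δ own own =
      max (min (own + δ) κ - max (own - δ) (-κ)) 0 / (2 * κ) / 2 := by
  rw [payoff, if_pos rfl, set_self, integral_box hf]

lemma lem_suff {κ δ x₁ x₂ : ℝ} (hκ : 0 < κ) (hδ : 0 < δ) {f : ℝ → ℝ}
    (hf : ∀ t, f t = if t ∈ Icc (-κ) κ then 1 / (2 * κ) else 0)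
    (h1 : -κ + δ ≤ x₁) (h2 : x₁ + 2 * δ ≤ x₂) (h3 : x₂ ≤ κ - δ) :
    IsEquilibrium f δ x₁ x₂ := by
  have h2κ : (0:ℝ) < 2 * κ := by linarith
  have hx : x₁ < x₂ := by linarith
  have hp1 : payoff f δ x₁ x₂ = 2 * δ / (2 * κ) := by
    rw [payoff_lt hf hx, min_eq_left (show x₁ + δ ≤ (x₁ + x₂) / 2 by linarith),
      min_eq_left (show x₁ + δ ≤ κ by linarith),
      max_eq_left (show -κ ≤ x₁ - δ by linarith),
      show x₁ + δ - (x₁ - δ) = 2 * δ by ring,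
      max_eq_left (show (0:ℝ) ≤ 2 * δ by linarith)]
  have hp2 : payoff f δ x₂ x₁ = 2 * δ / (2 * κ) := by
    rw [payoff_gt hf hx, max_eq_left (show (x₂ + x₁) / 2 ≤ x₂ - δ by linarith),
      min_eq_left (show x₂ + δ ≤ κ by linarith),
      max_eq_left (show -κ ≤ x₂ - δ by linarith),
      show x₂ + δ - (x₂ - δ) = 2 * δ by ring,
      max_eq_left (show (0:ℝ) ≤ 2 * δ by linarith)]
  have bnd : ∀ y opp : ℝ, y < opp →
      max (min (min (y + δ) ((y + opp) / 2)) κ - max (y - δ) (-κ)) 0 ≤ 2 * δ := by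
    intro y opp _
    have u1 := min_le_left (min (y + δ) ((y + opp) / 2)) κ
    have u2 := min_le_left (y + δ) ((y + opp) / 2)
    have u3 := le_max_left (y - δ) (-κ)
    exact max_le (by linarith) (by linarith)
  have bnd' : ∀ y opp : ℝ, opp < y →
      max (min (y + δ) κ - max (max (y - δ) ((y + opp) / 2)) (-κ)) 0 ≤ 2 * δ := by
    intro y opp _
    have u1 := min_le_left (y + δ) κ
    have u2 := le_max_left (y - δ) ((y + opp) / 2)
    have u3 := le_max_left (max (y - δ) ((y + opp) / 2)) (-κ)
    exact max_le (by linarith) (by linarith)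
  have bnds : ∀ y : ℝ, max (min (y + δ) κ - max (y - δ) (-κ)) 0 ≤ 2 * δ := by
    intro y
    have u1 := min_le_left (y + δ) κ
    have u2 := le_max_left (y - δ) (-κ)
    exact max_le (by linarith) (by linarith)
  constructor
  · intro y
    rw [hp1]
    rcases lt_trichotomy y x₂ with h | h | h
    · rw [payoff_lt hf h, div_le_div_iff_of_pos_right h2κ]
      exact bnd y x₂ h
    · subst h
      rw [payoff_self hf, div_right_comm, div_le_div_iff_of_pos_right h2κ]
      linarith [bnds y]
    · rw [payoff_gt hf h, div_le_div_iff_of_pos_right h2κ]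
      exact bnd' y x₂ h
  · intro y
    rw [hp2]
    rcases lt_trichotomy y x₁ with h | h | h
    · rw [payoff_lt hf h, div_le_div_iff_of_pos_right h2κ]
      exact bnd y x₁ h
    · subst h
      rw [payoff_self hf, div_right_comm, div_le_div_iff_of_pos_right h2κ]
      linarith [bnds y]
    · rw [payoff_gt hf h, div_le_div_iff_of_pos_right h2κ]
      exact bnd' y x₁ h
set_option maxHeartbeats 2000000 in
lemma lem_nec {κ δ x₁ x₂ : ℝ} (hκ : 0 < κ) (hδ : 0 < δ) {f : ℝ → ℝ}
    (hf : ∀ t, f t = if t ∈ Icc (-κ) κ then 1 / (2 * κ) else 0)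
    (hE : IsEquilibrium f δ x₁ x₂) (hgap : 2 * δ ≤ x₂ - x₁) :
    -κ + δ ≤ x₁ ∧ x₂ ≤ κ - δ := by
  obtain ⟨E1, E2⟩ := hE
  have h2κ : (0:ℝ) < 2 * κ := by linarith
  have hx : x₁ < x₂ := by linarith
  set p₁ := max (min (x₁ + δ) κ - max (x₁ - δ) (-κ)) 0 with hp₁def
  set p₂ := max (min (x₂ + δ) κ - max (x₂ - δ) (-κ)) 0 with hp₂def
  have hp1 : payoff f δ x₁ x₂ = p₁ / (2 * κ) := by
    rw [payoff_lt hf hx, min_eq_left (show x₁ + δ ≤ (x₁ + x₂) / 2 by linarith), ← hp₁def]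
  have hp2 : payoff f δ x₂ x₁ = p₂ / (2 * κ) := by
    rw [payoff_gt hf hx, max_eq_left (show (x₂ + x₁) / 2 ≤ x₂ - δ by linarith), ← hp₂def]
  have dev1 : ∀ y, y < x₂ →
      max (min (min (y + δ) ((y + x₂) / 2)) κ - max (y - δ) (-κ)) 0 ≤ p₁ := by
    intro y hy
    have h := E1 y
    rwa [payoff_lt hf hy, hp1, div_le_div_iff_of_pos_right h2κ] at h
  have dev1' : ∀ y, x₂ < y →
      max (min (y + δ) κ - max (max (y - δ) ((y + x₂) / 2)) (-κ)) 0 ≤ p₁ := by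
    intro y hy
    have h := E1 y
    rwa [payoff_gt hf hy, hp1, div_le_div_iff_of_pos_right h2κ] at h
  have dev2 : ∀ y, x₁ < y →
      max (min (y + δ) κ - max (max (y - δ) ((y + x₁) / 2)) (-κ)) 0 ≤ p₂ := by
    intro y hy
    have h := E2 y
    rwa [payoff_gt hf hy, hp2, div_le_div_iff_of_pos_right h2κ] at h
  have dev2' : ∀ y, y < x₁ →
      max (min (min (y + δ) ((y + x₁) / 2)) κ - max (y - δ) (-κ)) 0 ≤ p₂ := by
    intro y hy
    have h := E2 y
    rwa [payoff_lt hf hy, hp2, div_le_div_iff_of_pos_right h2κ] at h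
  have hC : p₂ / 2 ≤ p₁ := by
    have h := E1 x₂
    rwa [payoff_self hf, hp1, ← hp₂def, div_right_comm, div_le_div_iff_of_pos_right h2κ] at h
  have hC' : p₁ / 2 ≤ p₂ := by
    have h := E2 x₁
    rwa [payoff_self hf, hp2, ← hp₁def, div_right_comm, div_le_div_iff_of_pos_right h2κ] at h
  have b1l := min_le_left (x₁ + δ) κ
  have b1r := min_le_right (x₁ + δ) κ
  have c1l := le_max_left (x₁ - δ) (-κ)
  have c1r := le_max_right (x₁ - δ) (-κ)
  have b2l := min_le_left (x₂ + δ) κ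
  have b2r := min_le_right (x₂ + δ) κ
  have c2l := le_max_left (x₂ - δ) (-κ)
  have c2r := le_max_right (x₂ - δ) (-κ)
  have p1nn : 0 ≤ p₁ := le_max_right _ _
  have p2nn : 0 ≤ p₂ := le_max_right _ _
  have p1le : p₁ ≤ 2 * δ := max_le (by linarith) (by linarith)
  have p2le : p₂ ≤ 2 * δ := max_le (by linarith) (by linarith)
  have boxOf1 : 2 * δ ≤ p₁ → δ - κ ≤ x₁ ∧ x₁ + δ ≤ κ := by
    intro h
    rcases le_total (min (x₁ + δ) κ - max (x₁ - δ) (-κ)) 0 with h0 | h0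
    · rw [hp₁def, max_eq_right h0] at h; constructor <;> linarith
    · rw [hp₁def, max_eq_left h0] at h; constructor <;> linarith
  have boxOf2 : 2 * δ ≤ p₂ → δ - κ ≤ x₂ ∧ x₂ + δ ≤ κ := by
    intro h
    rcases le_total (min (x₂ + δ) κ - max (x₂ - δ) (-κ)) 0 with h0 | h0
    · rw [hp₂def, max_eq_right h0] at h; constructor <;> linarith
    · rw [hp₂def, max_eq_left h0] at h; constructor <;> linarith
  have hsum : p₁ + p₂ ≤ 2 * κ := by
    rcases le_or_gt (x₂ - δ) κ with h0 | h0
    · have hm : max (x₂ - δ) (-κ) ≤ κ := max_le h0 (by linarith)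
      have hml := le_max_left (x₂ - δ) (-κ)
      have u2 : p₂ ≤ κ - max (x₂ - δ) (-κ) := max_le (by linarith) (by linarith)
      have u1 : p₁ ≤ max (x₂ - δ) (-κ) + κ := max_le (by linarith) (by linarith)
      linarith
    · have u2 : p₂ ≤ 0 := max_le (by linarith) le_rfl
      have u1 : p₁ ≤ 2 * κ := max_le (by linarith) (by linarith)
      linarith
  have h2δκ : 2 * δ ≤ κ := by
    by_contra hcon
    push_neg at hcon
    have EG2 : δ - κ ≤ x₁ → x₁ + δ ≤ κ → 2 * δ ≤ p₁ → False := by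
      intro hb1 hb2 hp
      rcases lt_or_ge x₁ (κ - δ) with h' | h'
      · have D := dev2 (κ - δ) (by linarith)
        have l1 : κ ≤ min (κ - δ + δ) κ := le_min (by linarith) le_rfl
        have l2 : max (max (κ - δ - δ) ((κ - δ + x₁) / 2)) (-κ) ≤ (κ - δ + x₁) / 2 :=
          max_le (max_le (by linarith) le_rfl) (by linarith)
        have l3 := le_max_left
          (min (κ - δ + δ) κ - max (max (κ - δ - δ) ((κ - δ + x₁) / 2)) (-κ)) 0
        have u : p₂ ≤ κ - δ - x₁ := max_le (by linarith) (by linarith)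
        linarith
      · have u : p₂ ≤ 0 := max_le (by linarith) le_rfl
        linarith
    have EG1 : δ - κ ≤ x₂ → x₂ + δ ≤ κ → 2 * δ ≤ p₂ → False := by
      intro hb1 hb2 hp
      rcases lt_or_ge (δ - κ) x₂ with h' | h'
      · have D := dev1 (δ - κ) (by linarith)
        have l1 : (x₂ + δ - κ) / 2 ≤ min (min (δ - κ + δ) ((δ - κ + x₂) / 2)) κ :=
          le_min (le_min (by linarith) (by linarith)) (by linarith)
        have l2 : max (δ - κ - δ) (-κ) ≤ -κ := max_le (by linarith) le_rfl
        have l3 := le_max_left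
          (min (min (δ - κ + δ) ((δ - κ + x₂) / 2)) κ - max (δ - κ - δ) (-κ)) 0
        have u : p₁ ≤ x₂ - δ + κ := max_le (by linarith) (by linarith)
        linarith
      · have u : p₁ ≤ 0 := max_le (by linarith) le_rfl
        linarith
    rcases le_or_gt δ κ with hδκ | hδκ
    · -- δ ≤ κ < 2δ
      rcases le_or_gt (2 * δ) x₂ with ha | ha
      · have D := dev1 0 (by linarith)
        have l1 : δ ≤ min (min (0 + δ) ((0 + x₂) / 2)) κ :=
          le_min (le_min (by linarith) (by linarith)) (by linarith)
        have l2 : max (0 - δ) (-κ) ≤ -δ := max_le (by linarith) (by linarith)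
        have l3 := le_max_left (min (min (0 + δ) ((0 + x₂) / 2)) κ - max (0 - δ) (-κ)) 0
        have hp : 2 * δ ≤ p₁ := by linarith
        obtain ⟨hb1, hb2⟩ := boxOf1 hp
        exact EG2 hb1 hb2 hp
      · rcases le_or_gt x₁ (-(2 * δ)) with ha' | ha'
        · have D := dev2 0 (by linarith)
          have l1 : δ ≤ min (0 + δ) κ := le_min (by linarith) (by linarith)
          have l2 : max (max (0 - δ) ((0 + x₁) / 2)) (-κ) ≤ -δ :=
            max_le (max_le (by linarith) (by linarith)) (by linarith)
          have l3 := le_max_left (min (0 + δ) κ - max (max (0 - δ) ((0 + x₁) / 2)) (-κ)) 0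
          have hp : 2 * δ ≤ p₂ := by linarith
          obtain ⟨hb1, hb2⟩ := boxOf2 hp
          exact EG1 hb1 hb2 hp
        · -- -2δ < x₁ < 0 < x₂ < 2δ
          rcases lt_or_ge x₂ (3 * δ - κ) with hc | hc
          · have D := dev1 (δ - κ) (by linarith)
            have l1 : (x₂ + δ - κ) / 2 ≤ min (min (δ - κ + δ) ((δ - κ + x₂) / 2)) κ :=
              le_min (le_min (by linarith) (by linarith)) (by linarith)
            have l2 : max (δ - κ - δ) (-κ) ≤ -κ := max_le (by linarith) le_rfl
            have l3 := le_max_left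
              (min (min (δ - κ + δ) ((δ - κ + x₂) / 2)) κ - max (δ - κ - δ) (-κ)) 0
            have u : p₁ ≤ x₂ - δ + κ := max_le (by linarith) (by linarith)
            linarith
          · have D := dev1 (x₂ - 2 * δ) (by linarith)
            have l1 : x₂ - δ ≤ min (min (x₂ - 2 * δ + δ) ((x₂ - 2 * δ + x₂) / 2)) κ :=
              le_min (le_min (by linarith) (by linarith)) (by linarith)
            have l2 : max (x₂ - 2 * δ - δ) (-κ) ≤ x₂ - 3 * δ :=
              max_le (by linarith) (by linarith)
            have l3 := le_max_left
              (min (min (x₂ - 2 * δ + δ) ((x₂ - 2 * δ + x₂) / 2)) κ - max (x₂ - 2 * δ - δ) (-κ)) 0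
            have hp : 2 * δ ≤ p₁ := by linarith
            obtain ⟨hb1, hb2⟩ := boxOf1 hp
            exact EG2 hb1 hb2 hp
    · -- κ < δ
      rcases le_or_gt (2 * δ) x₂ with ha | ha
      · have D := dev1 0 (by linarith)
        have l1 : κ ≤ min (min (0 + δ) ((0 + x₂) / 2)) κ :=
          le_min (le_min (by linarith) (by linarith)) le_rfl
        have l2 : max (0 - δ) (-κ) ≤ -κ := max_le (by linarith) le_rfl
        have l3 := le_max_left (min (min (0 + δ) ((0 + x₂) / 2)) κ - max (0 - δ) (-κ)) 0
        linarith
      · rcases le_or_gt x₂ 0 with hb | hb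
        · have D := dev2 0 (by linarith)
          have l1 : κ ≤ min (0 + δ) κ := le_min (by linarith) le_rfl
          have l2 : max (max (0 - δ) ((0 + x₁) / 2)) (-κ) ≤ -κ :=
            max_le (max_le (by linarith) (by linarith)) le_rfl
          have l3 := le_max_left (min (0 + δ) κ - max (max (0 - δ) ((0 + x₁) / 2)) (-κ)) 0
          linarith
        · have D1 := dev1 0 (by linarith)
          have mx2 := min_le_left (x₂ / 2) κ
          have m1 : min (x₂ / 2) κ ≤ min (min (0 + δ) ((0 + x₂) / 2)) κ :=
            le_min (le_min (by linarith) (by linarith)) (min_le_right _ _)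
          have m2 : max (0 - δ) (-κ) ≤ -κ := max_le (by linarith) le_rfl
          have m3 := le_max_left (min (min (0 + δ) ((0 + x₂) / 2)) κ - max (0 - δ) (-κ)) 0
          have D2 := dev2 0 (by linarith)
          have nx1 := le_max_left (x₁ / 2) (-κ)
          have nx1' := le_max_right (x₁ / 2) (-κ)
          have n1 : κ ≤ min (0 + δ) κ := le_min (by linarith) le_rfl
          have n2 : max (max (0 - δ) ((0 + x₁) / 2)) (-κ) ≤ max (x₁ / 2) (-κ) :=
            max_le (max_le (by linarith) (by linarith)) (le_max_right _ _)
          have n3 := le_max_left (min (0 + δ) κ - max (max (0 - δ) ((0 + x₁) / 2)) (-κ)) 0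
          have q1 : 0 < min (x₂ / 2) κ := lt_min (by linarith) hκ
          have q2 : max (x₁ / 2) (-κ) < 0 := max_lt (by linarith) (by linarith)
          linarith
  -- now 2δ ≤ κ
  have g2 : -κ + δ ≤ x₁ := by
    by_contra hg
    push_neg at hg
    have hplt : p₁ < 2 * δ := max_lt (by linarith) (by linarith)
    rcases le_or_gt (-κ + 3 * δ) x₂ with hi | hi
    · obtain ⟨y, hy1, hy2, hy3⟩ : ∃ y, y ≤ x₂ - 2 * δ ∧ y ≤ κ - δ ∧ δ - κ ≤ y :=
        ⟨min (x₂ - 2 * δ) (κ - δ), min_le_left _ _, min_le_right _ _,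
          le_min (by linarith) (by linarith)⟩
      have D := dev1 y (by linarith)
      have l1 : y + δ ≤ min (min (y + δ) ((y + x₂) / 2)) κ :=
        le_min (le_min le_rfl (by linarith)) (by linarith)
      have l2 : max (y - δ) (-κ) ≤ y - δ := max_le le_rfl (by linarith)
      have l3 := le_max_left (min (min (y + δ) ((y + x₂) / 2)) κ - max (y - δ) (-κ)) 0
      linarith
    · rcases le_or_gt x₂ (κ - 3 * δ) with hii | hii
      · obtain ⟨y, hy1, hy2, hy3⟩ : ∃ y, x₂ + 2 * δ ≤ y ∧ y ≤ κ - δ ∧ δ - κ ≤ y :=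
          ⟨max (x₂ + 2 * δ) (δ - κ), le_max_left _ _,
            max_le (by linarith) (by linarith), le_max_right _ _⟩
        have D := dev1' y (by linarith)
        have l1 : y + δ ≤ min (y + δ) κ := le_min le_rfl (by linarith)
        have l2 : max (max (y - δ) ((y + x₂) / 2)) (-κ) ≤ y - δ :=
          max_le (max_le le_rfl (by linarith)) (by linarith)
        have l3 := le_max_left (min (y + δ) κ - max (max (y - δ) ((y + x₂) / 2)) (-κ)) 0
        linarith
      · have D := dev1 (δ - κ) (by linarith)
        have l1 : (x₂ + δ - κ) / 2 ≤ min (min (δ - κ + δ) ((δ - κ + x₂) / 2)) κ :=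
          le_min (le_min (by linarith) (by linarith)) (by linarith)
        have l2 : max (δ - κ - δ) (-κ) ≤ -κ := max_le (by linarith) le_rfl
        have l3 := le_max_left
          (min (min (δ - κ + δ) ((δ - κ + x₂) / 2)) κ - max (δ - κ - δ) (-κ)) 0
        have u : p₁ < (x₂ + δ + κ) / 2 := max_lt (by linarith) (by linarith)
        linarith
  have g3 : x₂ ≤ κ - δ := by
    by_contra hg
    push_neg at hg
    have hplt : p₂ < 2 * δ := max_lt (by linarith) (by linarith)
    rcases le_or_gt x₁ (κ - 3 * δ) with hi | hi
    · obtain ⟨y, hy1, hy2, hy3⟩ : ∃ y, x₁ + 2 * δ ≤ y ∧ y ≤ κ - δ ∧ δ - κ ≤ y :=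
        ⟨max (x₁ + 2 * δ) (δ - κ), le_max_left _ _,
          max_le (by linarith) (by linarith), le_max_right _ _⟩
      have D := dev2 y (by linarith)
      have l1 : y + δ ≤ min (y + δ) κ := le_min le_rfl (by linarith)
      have l2 : max (max (y - δ) ((y + x₁) / 2)) (-κ) ≤ y - δ :=
        max_le (max_le le_rfl (by linarith)) (by linarith)
      have l3 := le_max_left (min (y + δ) κ - max (max (y - δ) ((y + x₁) / 2)) (-κ)) 0
      linarith
    · rcases le_or_gt (-κ + 3 * δ) x₁ with hii | hii
      · obtain ⟨y, hy1, hy2, hy3⟩ : ∃ y, y ≤ x₁ - 2 * δ ∧ y ≤ κ - δ ∧ δ - κ ≤ y :=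
          ⟨min (x₁ - 2 * δ) (κ - δ), min_le_left _ _, min_le_right _ _,
            le_min (by linarith) (by linarith)⟩
        have D := dev2' y (by linarith)
        have l1 : y + δ ≤ min (min (y + δ) ((y + x₁) / 2)) κ :=
          le_min (le_min le_rfl (by linarith)) (by linarith)
        have l2 : max (y - δ) (-κ) ≤ y - δ := max_le le_rfl (by linarith)
        have l3 := le_max_left (min (min (y + δ) ((y + x₁) / 2)) κ - max (y - δ) (-κ)) 0
        linarith
      · have D := dev2 (κ - δ) (by linarith)
        have l1 : κ ≤ min (κ - δ + δ) κ := le_min (by linarith) le_rfl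
        have l2 : max (max (κ - δ - δ) ((κ - δ + x₁) / 2)) (-κ) ≤ (κ - δ + x₁) / 2 :=
          max_le (max_le (by linarith) le_rfl) (by linarith)
        have l3 := le_max_left
          (min (κ - δ + δ) κ - max (max (κ - δ - δ) ((κ - δ + x₁) / 2)) (-κ)) 0
        have u : p₂ < (κ + δ - x₁) / 2 := max_lt (by linarith) (by linarith)
        linarith
  exact ⟨g2, g3⟩

theorem stmt_17 (κ : ℝ) (hκ : 0 < κ) (δ : ℝ) (hδ : 0 < δ)
    (f : ℝ → ℝ)
    (hf : ∀ t, f t = if t ∈ Icc (-κ) κ then 1 / (2 * κ) else 0) :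
    ((∃ x₁ x₂ : ℝ, IsEquilibrium f δ x₁ x₂ ∧ 2 * δ ≤ |x₂ - x₁|) ↔ 2 * δ ≤ κ) ∧
    (∀ x₁ x₂ : ℝ, x₁ ≤ x₂ → 2 * δ ≤ x₂ - x₁ →
      (IsEquilibrium f δ x₁ x₂ ↔
        (-κ + δ ≤ x₁ ∧ x₁ + 2 * δ ≤ x₂ ∧ x₂ ≤ κ - δ))) := by
  constructor
  · constructor
    · rintro ⟨x₁, x₂, hE, habs⟩
      rcases le_total x₁ x₂ with h | h
      · have hgap : 2 * δ ≤ x₂ - x₁ := by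
          rwa [abs_of_nonneg (by linarith)] at habs
        obtain ⟨g2, g3⟩ := lem_nec hκ hδ hf hE hgap
        linarith
      · have hgap : 2 * δ ≤ x₁ - x₂ := by
          rwa [abs_of_nonpos (by linarith), neg_sub] at habs
        obtain ⟨g2, g3⟩ := lem_nec hκ hδ hf ⟨hE.2, hE.1⟩ hgap
        linarith
    · intro h
      refine ⟨-κ + δ, κ - δ, lem_suff hκ hδ hf le_rfl (by linarith) le_rfl, ?_⟩
      rw [abs_of_nonneg (by linarith)]
      linarith
  · intro x₁ x₂ hle hgap
    constructor
    · intro hE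
      obtain ⟨g2, g3⟩ := lem_nec hκ hδ hf hE hgap
      exact ⟨g2, by linarith, g3⟩
    · rintro ⟨h1, h2, h3⟩
      exact lem_suff hκ hδ hf h1 h2 h3
end

section
/- In the fixed-price location game with consumers uniform on [−κ, κ], there is no pure Nash equilibrium in which both firms choose the same location x ≠ 0. -/
open MeasureTheory Set

lemma integ_aux (κ : ℝ) (hκ : 0 < κ) (f : ℝ → ℝ)
    (hf : ∀ t, f t = if t ∈ Icc (-κ) κ then 1 / (2 * κ) else 0) (a b : ℝ) :
    ∫ t in Icc a b, f t = max (min b κ - max a (-κ)) 0 / (2 * κ) := by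
  have hfe : f = (Icc (-κ) κ).indicator (fun _ => 1 / (2 * κ)) := by
    funext t; rw [hf, Set.indicator_apply]
  rw [hfe, setIntegral_indicator measurableSet_Icc,
    show Icc a b ∩ Icc (-κ) κ = Icc (max a (-κ)) (min b κ) from Icc_inter_Icc,
    setIntegral_const, measureReal_def, Real.volume_Icc, ENNReal.toReal_ofReal', smul_eq_mul]
  ring

lemma setE_aux (x δ : ℝ) : {t : ℝ | |t - x| ≤ δ} = Icc (x - δ) (x + δ) := by
  ext t
  simp only [mem_setOf_eq, abs_le, mem_Icc]
  constructor <;> rintro ⟨h1, h2⟩ <;> constructor <;> linarith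

lemma setDpos_aux (x δ : ℝ) (hx : 0 < x) :
    {t : ℝ | |t - 0| ≤ δ ∧ |t - 0| ≤ |t - x|} = Icc (-δ) (min δ (x / 2)) := by
  ext t
  have key : |t| ≤ |t - x| ↔ t ≤ x / 2 := by
    rcases abs_cases t with ⟨h1, h2⟩ | ⟨h1, h2⟩ <;>
      rcases abs_cases (t - x) with ⟨h3, h4⟩ | ⟨h3, h4⟩ <;>
      rw [h1, h3] <;> constructor <;> intro h <;> linarith
  simp only [mem_setOf_eq, sub_zero, key]
  simp only [mem_Icc, abs_le, le_min_iff]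
  tauto

lemma setDneg_aux (x δ : ℝ) (hx : x < 0) :
    {t : ℝ | |t - 0| ≤ δ ∧ |t - 0| ≤ |t - x|} = Icc (max (-δ) (x / 2)) δ := by
  ext t
  have key : |t| ≤ |t - x| ↔ x / 2 ≤ t := by
    rcases abs_cases t with ⟨h1, h2⟩ | ⟨h1, h2⟩ <;>
      rcases abs_cases (t - x) with ⟨h3, h4⟩ | ⟨h3, h4⟩ <;>
      rw [h1, h3] <;> constructor <;> intro h <;> linarith
  simp only [mem_setOf_eq, sub_zero, key]
  simp only [mem_Icc, abs_le, max_le_iff]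
  tauto

theorem stmt_19 (κ : ℝ) (hκ : 0 < κ) (δ : ℝ) (hδ : 0 < δ)
    (f : ℝ → ℝ)
    (hf : ∀ t, f t = if t ∈ Icc (-κ) κ then 1 / (2 * κ) else 0) :
    ∀ x : ℝ, x ≠ 0 → ¬ IsEquilibrium f δ x x := by
  intro x hx h
  have h0 := h.1 0
  rw [payoff, payoff, if_pos rfl, if_neg (Ne.symm hx)] at h0
  rw [setE_aux x δ, integ_aux κ hκ f hf] at h0
  have h2κ : (0 : ℝ) < 2 * κ := by linarith
  -- bound on the equilibrium numerator
  have hb : max (min (x + δ) κ - max (x - δ) (-κ)) 0 ≤ 2 * min δ κ := by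
    apply max_le
    · rcases le_total δ κ with hc | hc
      · rw [min_eq_left hc]
        have := min_le_left (x + δ) κ
        have := le_max_left (x - δ) (-κ)
        linarith
      · rw [min_eq_right hc]
        have := min_le_right (x + δ) κ
        have := le_max_right (x - δ) (-κ)
        linarith
    · have : (0:ℝ) < min δ κ := lt_min hδ hκ
      linarith
  have hm : (0 : ℝ) < min δ κ := lt_min hδ hκ
  rcases hx.lt_or_gt with hxneg | hxpos
  · -- x < 0
    rw [setDneg_aux x δ hxneg, integ_aux κ hκ f hf] at h0
    have hM : max (max (-δ) (x / 2)) (-κ) < 0 :=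
      max_lt (max_lt (by linarith) (by linarith)) (by linarith)
    have ha : min δ κ < min δ κ - max (max (-δ) (x / 2)) (-κ) := by linarith
    rw [max_eq_left (by linarith : (0:ℝ) ≤ min δ κ - max (max (-δ) (x / 2)) (-κ))] at h0
    rw [div_le_div_iff₀ h2κ (by linarith : (0:ℝ) < 2),
      div_mul_cancel₀ _ (ne_of_gt h2κ)] at h0
    linarith
  · -- 0 < x
    rw [setDpos_aux x δ hxpos, integ_aux κ hκ f hf] at h0
    have hA : (0:ℝ) < min (min δ (x / 2)) κ := lt_min (lt_min hδ (by linarith)) hκ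
    have hM : max (-δ) (-κ) = -(min δ κ) := max_neg_neg δ κ
    rw [hM] at h0
    have ha : min δ κ < min (min δ (x / 2)) κ - -(min δ κ) := by linarith
    rw [max_eq_left (by linarith : (0:ℝ) ≤ min (min δ (x / 2)) κ - -(min δ κ))] at h0
    rw [div_le_div_iff₀ h2κ (by linarith : (0:ℝ) < 2),
      div_mul_cancel₀ _ (ne_of_gt h2κ)] at h0
    linarith
end
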